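/- There exist constants τ₀ > 0 and C > 0, depending only on n, the constants c_Y, C_R, c_ρ, A_0, A_1, the number β, and the bounds sup|V − E| and sup|∂_y V|, such that for every 0 < τ ≤ τ₀, every 0 < ε ≤ τ₀/10, every smooth ρ : ℝ^{n−1} → (−∞, 0] with |∂_{y'}ρ| ≤ c_ρ and |∂²_{y'}ρ| ≤ c_ρ, and every (y, ξ) ∈ ℝⁿ × ℝⁿ with y ∈ W(τ, ε) and p_ψ(y, ξ) = 0, one has |a(y', ξ') − (β² + E − V(y))| ≤ C τ₀ and |ξ_n| ≤ C τ₀. -/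

import Mathlib

open scoped BigOperators

noncomputable section

/-- `ℝ^m` with its Euclidean norm. -/
abbrev Esp (m : ℕ) := EuclideanSpace ℝ (Fin m)

/-- The quadratic form with (real) coefficient matrix `M`, evaluated at `v`. -/
noncomputable def quadForm {m : ℕ} (M : Matrix (Fin m) (Fin m) ℝ) (v : Esp m) : ℝ :=
  ∑ i, ∑ j, M i j * v i * v j

/-- The quadratic form with real coefficient matrix `M`, evaluated at a complex
covector `v`. -/
noncomputable def quadFormC {m : ℕ} (M : Matrix (Fin m) (Fin m) ℝ) (v : Fin m → ℂ) : ℂ :=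
  ∑ i, ∑ j, (M i j : ℂ) * v i * v j

/-- The complex tangential covector `ξ' + i ∂_{y'}ψ(y)` where `ψ(y) = (⋯)yₙ + 2τρ(y')`,
so that `∂_{y'_i}ψ = 2τ ∂_{y'_i}ρ(y')`. -/
noncomputable def zetaPrime {m : ℕ} (τ : ℝ) (ρ : Esp m → ℝ) (y' ξ' : Esp m) :
    Fin m → ℂ :=
  fun i => (ξ' i : ℂ) + Complex.I * (2 * τ * fderiv ℝ ρ y' (EuclideanSpace.single i 1))

/-- The Poisson bracket `{f, g} = Σⱼ (∂_{ξⱼ}f ∂_{yⱼ}g − ∂_{yⱼ}f ∂_{ξⱼ}g)` of two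
functions on phase space `ℝⁿ_y × ℝⁿ_ξ`, where `y = (y', yₙ)` and `ξ = (ξ', ξₙ)`. -/
noncomputable def poissonBracket {m : ℕ}
    (f g : (Esp m × ℝ) × (Esp m × ℝ) → ℝ) (z : (Esp m × ℝ) × (Esp m × ℝ)) : ℝ :=
  (∑ j : Fin m,
      (fderiv ℝ f z ((0 : Esp m × ℝ), (EuclideanSpace.single j (1 : ℝ), (0 : ℝ)))
          * fderiv ℝ g z ((EuclideanSpace.single j (1 : ℝ), (0 : ℝ)), (0 : Esp m × ℝ))
        - fderiv ℝ f z ((EuclideanSpace.single j (1 : ℝ), (0 : ℝ)), (0 : Esp m × ℝ))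
          * fderiv ℝ g z ((0 : Esp m × ℝ), (EuclideanSpace.single j (1 : ℝ), (0 : ℝ)))))
    + (fderiv ℝ f z ((0 : Esp m × ℝ), ((0 : Esp m), (1 : ℝ)))
          * fderiv ℝ g z (((0 : Esp m), (1 : ℝ)), (0 : Esp m × ℝ))
        - fderiv ℝ f z (((0 : Esp m), (1 : ℝ)), (0 : Esp m × ℝ))
          * fderiv ℝ g z ((0 : Esp m × ℝ), ((0 : Esp m), (1 : ℝ))))

/-- The conjugated symbol `p_ψ(y, ξ) = p(y, ξ + i ∂_yψ(y))` for
`p(y,ξ) = ξₙ² + a(y',ξ') − 2yₙ b(y',ξ') + R(y,ξ') − 1` and `ψ(y) = yₙ + 2τρ(y')`,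
where `a`, `b`, `R` are the quadratic forms with coefficient matrices `A`, `B`, `R`. -/
noncomputable def pPsi {m : ℕ} (A B : Esp m → Matrix (Fin m) (Fin m) ℝ)
    (R : Esp m × ℝ → Matrix (Fin m) (Fin m) ℝ) (τ : ℝ) (ρ : Esp m → ℝ)
    (z : (Esp m × ℝ) × (Esp m × ℝ)) : ℂ :=
  ((z.2.2 : ℂ) + Complex.I) ^ 2
    + quadFormC (A z.1.1) (zetaPrime τ ρ z.1.1 z.2.1)
    - 2 * (z.1.2 : ℂ) * quadFormC (B z.1.1) (zetaPrime τ ρ z.1.1 z.2.1)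
    + quadFormC (R z.1) (zetaPrime τ ρ z.1.1 z.2.1)
    - 1

/-- The conjugated Schrödinger symbol `p_ψ(y, ξ) = p(y, ξ + i ∂_yψ(y))` for
`p(y,ξ) = ξₙ² + a(y',ξ') − 2yₙ b(y',ξ') + R(y,ξ') + V(y) − E` and
`ψ(y) = β yₙ + 2τρ(y')`, where `a`, `b`, `R` are the quadratic forms with coefficient
matrices `A`, `B`, `R`. -/
noncomputable def pPsiSch {m : ℕ} (A B : Esp m → Matrix (Fin m) (Fin m) ℝ)
    (R : Esp m × ℝ → Matrix (Fin m) (Fin m) ℝ) (V : Esp m × ℝ → ℝ) (E β τ : ℝ)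
    (ρ : Esp m → ℝ) (z : (Esp m × ℝ) × (Esp m × ℝ)) : ℂ :=
  ((z.2.2 : ℂ) + Complex.I * (β : ℂ)) ^ 2
    + quadFormC (A z.1.1) (zetaPrime τ ρ z.1.1 z.2.1)
    - 2 * (z.1.2 : ℂ) * quadFormC (B z.1.1) (zetaPrime τ ρ z.1.1 z.2.1)
    + quadFormC (R z.1) (zetaPrime τ ρ z.1.1 z.2.1)
    + ((V z.1 - E : ℝ) : ℂ)

/-!
Write `η = 2τ ∇ρ(y') = ∂_{y'}ψ` and split `p_ψ = 0` into real and imaginary parts. On `W(τ, ε)`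
both `|yₙ|` and `‖η‖` are `O(τ₀)`. For `τ₀` small, the real part and the ellipticity of `a` bound
`‖ξ'‖` uniformly. The imaginary part is `2βξₙ = −a(ξ', η) + 2yₙ b(ξ', η) − R(y; ξ', η)` in polar
forms, and a polar form is bounded by `2c‖ξ'‖‖η‖` whenever its quadratic form is bounded by `c‖·‖²`;
hence `|ξₙ| = O(τ₀)`. Feeding this back into the real part gives `a(ξ') = β² + E − V(y) + O(τ₀)`.
-/

open InnerProductSpace

section QuadraticForms

variable {m : ℕ}

def polarForm (M : Matrix (Fin m) (Fin m) ℝ) (x y : Esp m) : ℝ :=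
  ∑ i, ∑ j, M i j * (x i * y j + y i * x j)

theorem quadForm_add (M : Matrix (Fin m) (Fin m) ℝ) (x y : Esp m) :
    quadForm M (x + y) = quadForm M x + quadForm M y + polarForm M x y := by
  simp only [quadForm, polarForm, PiLp.add_apply, ← Finset.sum_add_distrib]
  exact Finset.sum_congr rfl fun i _ => Finset.sum_congr rfl fun j _ => by ring

theorem quadForm_sub (M : Matrix (Fin m) (Fin m) ℝ) (x y : Esp m) :
    quadForm M (x - y) = quadForm M x + quadForm M y - polarForm M x y := by
  simp only [quadForm, polarForm, PiLp.sub_apply, ← Finset.sum_add_distrib,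
    ← Finset.sum_sub_distrib]
  exact Finset.sum_congr rfl fun i _ => Finset.sum_congr rfl fun j _ => by ring

theorem polarForm_smul_smul (M : Matrix (Fin m) (Fin m) ℝ) (s t : ℝ) (x y : Esp m) :
    polarForm M (s • x) (t • y) = s * t * polarForm M x y := by
  simp only [polarForm, PiLp.smul_apply, smul_eq_mul, Finset.mul_sum]
  exact Finset.sum_congr rfl fun i _ => Finset.sum_congr rfl fun j _ => by ring

theorem quadFormC_ofReal_add_I_mul (M : Matrix (Fin m) (Fin m) ℝ) (x y : Esp m) :
    quadFormC M (fun i => (x i : ℂ) + Complex.I * y i)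
      = ((quadForm M x - quadForm M y : ℝ) : ℂ) + (polarForm M x y : ℂ) * Complex.I := by
  have hterm : ∀ i j, (M i j : ℂ) * ((x i : ℂ) + Complex.I * y i) * ((x j : ℂ) + Complex.I * y j)
      = ((M i j * x i * x j - M i j * y i * y j : ℝ) : ℂ)
        + ((M i j * (x i * y j + y i * x j) : ℝ) : ℂ) * Complex.I := by
    intro i j; push_cast; linear_combination ((M i j : ℂ) * y i * y j) * Complex.I_sq
  simp only [quadFormC, quadForm, polarForm, hterm, Finset.sum_add_distrib, ← Finset.sum_mul]
  push_cast
  simp only [Finset.sum_sub_distrib]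

theorem abs_quadForm_le_of_abs_le {M : Matrix (Fin m) (Fin m) ℝ} {K : ℝ}
    (hM : ∀ i j, |M i j| ≤ K) (v : Esp m) : |quadForm M v| ≤ m * K * ‖v‖ ^ 2 := by
  have hK : ∀ i, ∑ j, |M i j * v i * v j| ≤ ∑ j, K * (|v i| * |v j|) := fun i =>
    Finset.sum_le_sum fun j _ => by
      rw [abs_mul, abs_mul, mul_assoc]
      exact mul_le_mul_of_nonneg_right (hM i j) (by positivity)
  have hCS : (∑ i, |v i|) ^ 2 ≤ m * ‖v‖ ^ 2 := by
    rw [EuclideanSpace.norm_sq_eq]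
    simpa using sq_sum_le_card_mul_sum_sq (s := Finset.univ) (f := fun i => |v i|)
  rcases Nat.eq_zero_or_pos m with rfl | hm
  · simp [quadForm]
  have hK0 : 0 ≤ K := (abs_nonneg _).trans (hM ⟨0, hm⟩ ⟨0, hm⟩)
  calc |quadForm M v| ≤ ∑ i, ∑ j, |M i j * v i * v j| :=
        (Finset.abs_sum_le_sum_abs _ _).trans
          (Finset.sum_le_sum fun i _ => Finset.abs_sum_le_sum_abs _ _)
    _ ≤ ∑ i, ∑ j, K * (|v i| * |v j|) := Finset.sum_le_sum fun i _ => hK i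
    _ = K * (∑ i, |v i|) ^ 2 := by
        rw [sq, Finset.sum_mul_sum, Finset.mul_sum]; simp only [Finset.mul_sum]
    _ ≤ K * (m * ‖v‖ ^ 2) := mul_le_mul_of_nonneg_left hCS hK0
    _ = m * K * ‖v‖ ^ 2 := by ring

theorem abs_polarForm_le_of_abs_quadForm_le {M : Matrix (Fin m) (Fin m) ℝ} {c : ℝ}
    (hM : ∀ v, |quadForm M v| ≤ c * ‖v‖ ^ 2) (x y : Esp m) :
    |polarForm M x y| ≤ 2 * c * ‖x‖ * ‖y‖ := by
  have hpar : ∀ x y : Esp m, |polarForm M x y| ≤ c * (‖x‖ ^ 2 + ‖y‖ ^ 2) := by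
    intro x y
    have h2 : 2 * polarForm M x y = quadForm M (x + y) - quadForm M (x - y) := by
      rw [quadForm_add, quadForm_sub]; ring
    have hlaw := parallelogram_law_with_norm ℝ x y
    have := abs_sub (quadForm M (x + y)) (quadForm M (x - y))
    rw [← h2, abs_mul, abs_two] at this
    have hc := congrArg (c * ·) hlaw
    linarith [hM (x + y), hM (x - y)]
  rcases eq_or_ne x 0 with rfl | hx
  · simp [polarForm]
  rcases eq_or_ne y 0 with rfl | hy
  · simp [polarForm]
  -- rescaling to `‖y‖ • x` and `‖x‖ • y` balances the two sides of `hpar`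
  have hxy : 0 < ‖x‖ * ‖y‖ := by positivity
  refine le_of_mul_le_mul_right ?_ hxy
  have := hpar (‖y‖ • x) (‖x‖ • y)
  rw [polarForm_smul_smul, abs_mul, abs_of_pos (by positivity), norm_smul, norm_smul,
    norm_norm, norm_norm] at this
  linarith

end QuadraticForms

section ConjugatedSymbol

variable {m : ℕ}

/- The real and imaginary parts of `p_ψ` at `((y', yₙ), (ξ', ξₙ))`, where `c = V(y) − E` and
`η = ∂_{y'}ψ(y)`; see `pPsiSch_eq`. -/
def pPsiSchRe (A B R : Matrix (Fin m) (Fin m) ℝ) (yn ξn β c : ℝ) (ξ η : Esp m) : ℝ :=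
  ξn ^ 2 - β ^ 2 + (quadForm A ξ - quadForm A η) - 2 * yn * (quadForm B ξ - quadForm B η)
    + (quadForm R ξ - quadForm R η) + c

def pPsiSchIm (A B R : Matrix (Fin m) (Fin m) ℝ) (yn ξn β : ℝ) (ξ η : Esp m) : ℝ :=
  2 * ξn * β + polarForm A ξ η - 2 * yn * polarForm B ξ η + polarForm R ξ η

theorem gradient_apply (f : Esp m → ℝ) (y : Esp m) (i : Fin m) :
    gradient f y i = fderiv ℝ f y (EuclideanSpace.single i 1) := by
  have h := EuclideanSpace.inner_single_left i (1 : ℝ) (gradient f y)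
  simp only [map_one, one_mul] at h
  rw [← h, gradient, real_inner_comm, toDual_symm_apply]

theorem norm_gradient (f : Esp m → ℝ) (y : Esp m) : ‖gradient f y‖ = ‖fderiv ℝ f y‖ := by
  simp [gradient]

theorem zetaPrime_eq (τ : ℝ) (ρ : Esp m → ℝ) (y' ξ' : Esp m) :
    zetaPrime τ ρ y' ξ' = fun i => (ξ' i : ℂ) + Complex.I * ((2 * τ) • gradient ρ y') i := by
  funext i
  simp [zetaPrime, gradient_apply, mul_assoc]

theorem pPsiSch_eq (A B : Esp m → Matrix (Fin m) (Fin m) ℝ)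
    (R : Esp m × ℝ → Matrix (Fin m) (Fin m) ℝ) (V : Esp m × ℝ → ℝ) (E β τ : ℝ)
    (ρ : Esp m → ℝ) (y' ξ' : Esp m) (yn ξn : ℝ) :
    pPsiSch A B R V E β τ ρ ((y', yn), (ξ', ξn))
      = (pPsiSchRe (A y') (B y') (R (y', yn)) yn ξn β (V (y', yn) - E) ξ'
            ((2 * τ) • gradient ρ y') : ℂ)
        + (pPsiSchIm (A y') (B y') (R (y', yn)) yn ξn β ξ' ((2 * τ) • gradient ρ y') : ℂ)
          * Complex.I := by
  simp only [pPsiSch, pPsiSchRe, pPsiSchIm, zetaPrime_eq, quadFormC_ofReal_add_I_mul]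
  push_cast
  linear_combination (β : ℂ) ^ 2 * Complex.I_sq

theorem pPsiSch_eq_zero_iff {A B : Esp m → Matrix (Fin m) (Fin m) ℝ}
    {R : Esp m × ℝ → Matrix (Fin m) (Fin m) ℝ} {V : Esp m × ℝ → ℝ} {E β τ : ℝ}
    {ρ : Esp m → ℝ} {y' ξ' : Esp m} {yn ξn : ℝ} :
    pPsiSch A B R V E β τ ρ ((y', yn), (ξ', ξn)) = 0 ↔
      pPsiSchRe (A y') (B y') (R (y', yn)) yn ξn β (V (y', yn) - E) ξ'
          ((2 * τ) • gradient ρ y') = 0 ∧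
        pPsiSchIm (A y') (B y') (R (y', yn)) yn ξn β ξ' ((2 * τ) • gradient ρ y') = 0 := by
  rw [pPsiSch_eq, Complex.ext_iff]
  simp

end ConjugatedSymbol

section Estimates

variable {m : ℕ} {A B R : Matrix (Fin m) (Fin m) ℝ} {Λ CR yn ξn β c : ℝ} {ξ η : Esp m}

theorem abs_quadForm_add_sq_sub_le_of_pPsiSchRe_eq_zero
    (hA : ∀ v, |quadForm A v| ≤ Λ * ‖v‖ ^ 2) (hB : ∀ v, |quadForm B v| ≤ Λ * ‖v‖ ^ 2)
    (hR : ∀ v, |quadForm R v| ≤ CR * yn ^ 2 * ‖v‖ ^ 2)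
    (hre : pPsiSchRe A B R yn ξn β c ξ η = 0) :
    |quadForm A ξ + ξn ^ 2 - (β ^ 2 - c)|
      ≤ Λ * ‖η‖ ^ 2 + (2 * Λ * |yn| + CR * yn ^ 2) * (‖ξ‖ ^ 2 + ‖η‖ ^ 2) := by
  have hdiff : quadForm A ξ + ξn ^ 2 - (β ^ 2 - c) = quadForm A η
      + 2 * yn * (quadForm B ξ - quadForm B η) - (quadForm R ξ - quadForm R η) := by
    unfold pPsiSchRe at hre; linarith
  have hBdiff : |quadForm B ξ - quadForm B η| ≤ Λ * (‖ξ‖ ^ 2 + ‖η‖ ^ 2) :=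
    (abs_sub _ _).trans (by linarith [hB ξ, hB η])
  have hRdiff : |quadForm R ξ - quadForm R η| ≤ CR * yn ^ 2 * (‖ξ‖ ^ 2 + ‖η‖ ^ 2) :=
    (abs_sub _ _).trans (by linarith [hR ξ, hR η])
  rw [hdiff]
  calc _ ≤ |quadForm A η| + |2 * yn * (quadForm B ξ - quadForm B η)|
          + |quadForm R ξ - quadForm R η| :=
        (abs_sub _ _).trans (add_le_add_left (abs_add_le _ _) _)
    _ = |quadForm A η| + 2 * |yn| * |quadForm B ξ - quadForm B η|
          + |quadForm R ξ - quadForm R η| := by rw [abs_mul, abs_mul, abs_two]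
    _ ≤ Λ * ‖η‖ ^ 2 + 2 * |yn| * (Λ * (‖ξ‖ ^ 2 + ‖η‖ ^ 2))
          + CR * yn ^ 2 * (‖ξ‖ ^ 2 + ‖η‖ ^ 2) := by gcongr; exact hA η
    _ = _ := by ring

theorem mul_abs_le_of_pPsiSchIm_eq_zero
    (hA : ∀ v, |quadForm A v| ≤ Λ * ‖v‖ ^ 2) (hB : ∀ v, |quadForm B v| ≤ Λ * ‖v‖ ^ 2)
    (hR : ∀ v, |quadForm R v| ≤ CR * yn ^ 2 * ‖v‖ ^ 2) (hβ : 0 ≤ β)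
    (him : pPsiSchIm A B R yn ξn β ξ η = 0) :
    β * |ξn| ≤ (Λ + 2 * Λ * |yn| + CR * yn ^ 2) * (‖ξ‖ * ‖η‖) := by
  have hsum : 2 * ξn * β = -polarForm A ξ η + 2 * yn * polarForm B ξ η - polarForm R ξ η := by
    unfold pPsiSchIm at him; linarith
  have hPA := abs_polarForm_le_of_abs_quadForm_le hA ξ η
  have hPB := abs_polarForm_le_of_abs_quadForm_le hB ξ η
  have hPR := abs_polarForm_le_of_abs_quadForm_le hR ξ η
  have : 2 * (β * |ξn|) ≤ 2 * ((Λ + 2 * Λ * |yn| + CR * yn ^ 2) * (‖ξ‖ * ‖η‖)) :=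
    calc 2 * (β * |ξn|) = |2 * ξn * β| := by rw [abs_mul, abs_mul, abs_two, abs_of_nonneg hβ]; ring
      _ ≤ |-polarForm A ξ η| + |2 * yn * polarForm B ξ η| + |polarForm R ξ η| := by
        rw [hsum]; exact (abs_sub _ _).trans (add_le_add_left (abs_add_le _ _) _)
      _ = |polarForm A ξ η| + 2 * |yn| * |polarForm B ξ η| + |polarForm R ξ η| := by
        rw [abs_neg, abs_mul, abs_mul, abs_two]
      _ ≤ 2 * Λ * ‖ξ‖ * ‖η‖ + 2 * |yn| * (2 * Λ * ‖ξ‖ * ‖η‖)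
          + 2 * (CR * yn ^ 2) * ‖ξ‖ * ‖η‖ := by gcongr
      _ = _ := by ring
  linarith

theorem norm_sq_le_of_pPsiSchRe_eq_zero {A1 MV : ℝ}
    (hA : ∀ v, |quadForm A v| ≤ Λ * ‖v‖ ^ 2) (hB : ∀ v, |quadForm B v| ≤ Λ * ‖v‖ ^ 2)
    (hR : ∀ v, |quadForm R v| ≤ CR * yn ^ 2 * ‖v‖ ^ 2)
    (hre : pPsiSchRe A B R yn ξn β c ξ η = 0) (hell : A1 * ‖ξ‖ ^ 2 ≤ quadForm A ξ)
    (hA1 : 0 < A1) (hΛ : 0 ≤ Λ) (hCR : 0 ≤ CR) (hc : |c| ≤ MV) (hyn : |yn| ≤ 1)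
    (hsmall : |yn| * (2 * Λ + CR) ≤ A1 / 2) (hη : ‖η‖ ≤ 1) :
    ‖ξ‖ ^ 2 ≤ 2 * (β ^ 2 + MV + Λ) / A1 + 1 := by
  have hbound := (abs_le.1 (abs_quadForm_add_sq_sub_le_of_pPsiSchRe_eq_zero hA hB hR hre)).2
  have hyn2 : yn ^ 2 ≤ |yn| := by simpa [sq_abs] using sq_le (abs_nonneg yn) hyn
  have hη2 : ‖η‖ ^ 2 ≤ 1 := pow_le_one₀ (norm_nonneg η) hη
  have hω : (2 * Λ * |yn| + CR * yn ^ 2) * (‖ξ‖ ^ 2 + ‖η‖ ^ 2) ≤ A1 / 2 * (‖ξ‖ ^ 2 + 1) :=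
    mul_le_mul (by nlinarith) (by linarith) (by positivity) (by positivity)
  have : (‖ξ‖ ^ 2 - 1) * A1 ≤ 2 * (β ^ 2 + MV + Λ) := by
    nlinarith [(abs_le.1 hc).1, sq_nonneg ξn, mul_le_mul_of_nonneg_left hη2 hΛ]
  linarith [(le_div_iff₀ hA1).2 this]

theorem abs_le_of_pPsiSchIm_eq_zero {S e : ℝ}
    (hA : ∀ v, |quadForm A v| ≤ Λ * ‖v‖ ^ 2) (hB : ∀ v, |quadForm B v| ≤ Λ * ‖v‖ ^ 2)
    (hR : ∀ v, |quadForm R v| ≤ CR * yn ^ 2 * ‖v‖ ^ 2)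
    (him : pPsiSchIm A B R yn ξn β ξ η = 0) (hβ : 0 < β) (hΛ : 0 ≤ Λ) (hCR : 0 ≤ CR)
    (hyn : |yn| ≤ 1) (hξ : ‖ξ‖ ≤ S) (hη : ‖η‖ ≤ e) :
    |ξn| ≤ (3 * Λ + CR) * S / β * e := by
  have hyn2 : yn ^ 2 ≤ 1 := by simpa [sq_abs] using pow_le_one₀ (n := 2) (abs_nonneg yn) hyn
  have hcoef : Λ + 2 * Λ * |yn| + CR * yn ^ 2 ≤ 3 * Λ + CR := by
    nlinarith [mul_le_mul_of_nonneg_left hyn hΛ, mul_le_mul_of_nonneg_left hyn2 hCR]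
  have hprod : ‖ξ‖ * ‖η‖ ≤ S * e := mul_le_mul hξ hη (norm_nonneg _) ((norm_nonneg _).trans hξ)
  have := (mul_abs_le_of_pPsiSchIm_eq_zero hA hB hR hβ.le him).trans
    (mul_le_mul hcoef hprod (by positivity) (by positivity))
  rw [div_mul_eq_mul_div, le_div_iff₀ hβ]
  linarith

theorem abs_quadForm_sub_le_of_pPsiSchRe_eq_zero {S t e x : ℝ}
    (hA : ∀ v, |quadForm A v| ≤ Λ * ‖v‖ ^ 2) (hB : ∀ v, |quadForm B v| ≤ Λ * ‖v‖ ^ 2)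
    (hR : ∀ v, |quadForm R v| ≤ CR * yn ^ 2 * ‖v‖ ^ 2)
    (hre : pPsiSchRe A B R yn ξn β c ξ η = 0) (hΛ : 0 ≤ Λ) (hCR : 0 ≤ CR)
    (hyn : |yn| ≤ t) (ht : t ≤ 1) (hη : ‖η‖ ≤ e) (he : e ≤ 1) (hξ : ‖ξ‖ ^ 2 ≤ S)
    (hξn : |ξn| ≤ x) :
    |quadForm A ξ - (β ^ 2 - c)| ≤ x ^ 2 + Λ * e + (2 * Λ + CR) * (S + 1) * t := by
  have hbound := abs_quadForm_add_sq_sub_le_of_pPsiSchRe_eq_zero hA hB hR hre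
  have hξn2 : ξn ^ 2 ≤ x ^ 2 := by simpa [sq_abs] using pow_le_pow_left₀ (abs_nonneg ξn) hξn 2
  have hη2 : ‖η‖ ^ 2 ≤ e := by nlinarith [norm_nonneg η]
  have hyn2 : yn ^ 2 ≤ |yn| := by simpa [sq_abs] using sq_le (abs_nonneg yn) (hyn.trans ht)
  have hω : 2 * Λ * |yn| + CR * yn ^ 2 ≤ (2 * Λ + CR) * t := by
    nlinarith [mul_le_mul_of_nonneg_left hyn2 hCR]
  have hnorms : ‖ξ‖ ^ 2 + ‖η‖ ^ 2 ≤ S + 1 := by nlinarith [norm_nonneg η]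
  calc |quadForm A ξ - (β ^ 2 - c)|
        ≤ |quadForm A ξ + ξn ^ 2 - (β ^ 2 - c)| + ξn ^ 2 := by
          have := abs_sub (quadForm A ξ + ξn ^ 2 - (β ^ 2 - c)) (ξn ^ 2)
          rwa [abs_of_nonneg (sq_nonneg ξn), show quadForm A ξ + ξn ^ 2 - (β ^ 2 - c) - ξn ^ 2
            = quadForm A ξ - (β ^ 2 - c) by ring] at this
    _ ≤ Λ * e + (2 * Λ + CR) * t * (S + 1) + x ^ 2 := by
          gcongr
          refine hbound.trans (add_le_add (mul_le_mul_of_nonneg_left hη2 hΛ)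
            (mul_le_mul hω hnorms (by positivity) (by nlinarith [abs_nonneg yn])))
    _ = _ := by ring

end Estimates

theorem exists_pos_small_enough {A1 c K : ℝ} (hA1 : 0 < A1) (hc : 0 ≤ c) (hK : 0 ≤ K) :
    ∃ τ0 : ℝ, 0 < τ0 ∧ τ0 ≤ 1 / 2 ∧ 2 * c * τ0 ≤ 1 ∧ 2 * τ0 * K ≤ A1 / 2 := by
  have hD : 0 < 2 * A1 + 2 * c * A1 + 4 * K := by positivity
  set τ0 := A1 / (2 * A1 + 2 * c * A1 + 4 * K)
  have hτ0 : 0 < τ0 := by positivity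
  have hτ0D : τ0 * (2 * A1 + 2 * c * A1 + 4 * K) = A1 := div_mul_cancel₀ A1 hD.ne'
  refine ⟨τ0, hτ0, ?_, ?_, ?_⟩ <;>
    nlinarith [mul_nonneg hτ0.le hK, mul_nonneg (mul_nonneg hτ0.le hc) hA1.le]

theorem statement4_general (m : ℕ)
    (cY CR cρ A0 A1 : ℝ)
    (hCR : 0 < CR) (hcρ : 0 < cρ) (hA0 : 0 < A0) (hA1 : 0 < A1)
    (E β MV MdV : ℝ) (hβ : 0 < β) :
    ∃ τ0 : ℝ, 0 < τ0 ∧ ∃ C : ℝ, 0 < C ∧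
      ∀ (A B : Esp m → Matrix (Fin m) (Fin m) ℝ)
        (R : Esp m × ℝ → Matrix (Fin m) (Fin m) ℝ) (V : Esp m × ℝ → ℝ),
        (∀ i j, ContDiffOn ℝ (⊤ : ℕ∞) (fun y' => A y' i j) {y' : Esp m | ‖y'‖ < 2 * cY}) →
        (∀ i j, ContDiffOn ℝ (⊤ : ℕ∞) (fun y' => B y' i j) {y' : Esp m | ‖y'‖ < 2 * cY}) →
        (∀ i j, ContDiff ℝ (⊤ : ℕ∞) (fun y => R y i j)) →
        ContDiff ℝ (⊤ : ℕ∞) V →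
        (∀ y : Esp m × ℝ, |V y - E| ≤ MV) →
        (∀ y : Esp m × ℝ, ‖fderiv ℝ V y‖ ≤ MdV) →
        (∀ y' : Esp m, ‖y'‖ < 2 * cY → ∀ ξ' : Esp m,
          A1 * ‖ξ'‖ ^ 2 ≤ quadForm (A y') ξ') →
        (∀ y' : Esp m, ‖y'‖ < 2 * cY → ∀ i j,
          |A y' i j| ≤ A0 ∧ |B y' i j| ≤ A0 ∧
          ∀ k, |fderiv ℝ (fun w => A w i j) y' (EuclideanSpace.single k (1 : ℝ))| ≤ A0 ∧
               |fderiv ℝ (fun w => B w i j) y' (EuclideanSpace.single k (1 : ℝ))| ≤ A0) →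
        (∀ y : Esp m × ℝ, |y.2| ≤ 1 → ∀ ξ' : Esp m,
          |quadForm (R y) ξ'| ≤ CR * y.2 ^ 2 * ‖ξ'‖ ^ 2 ∧
          ‖fderiv ℝ (fun w => quadForm (R w) ξ') y‖ ≤ CR * |y.2| * ‖ξ'‖ ^ 2) →
        (∀ y' : Esp m, ‖y'‖ < 2 * cY → ∀ ξ' : Esp m,
          (β ^ 2 - MV) / 2 ≤ quadForm (A y') ξ' → MdV < 2 * quadForm (B y') ξ') →
        ∀ τ : ℝ, 0 < τ → τ ≤ τ0 →
        ∀ ε : ℝ, 0 < ε → ε ≤ τ0 / 10 →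
        ∀ ρ : Esp m → ℝ, ContDiff ℝ (⊤ : ℕ∞) ρ → (∀ y', ρ y' ≤ 0) →
          (∀ y', ‖fderiv ℝ ρ y'‖ ≤ cρ) →
          (∀ y', ‖fderiv ℝ (fderiv ℝ ρ) y'‖ ≤ cρ) →
        ∀ z : (Esp m × ℝ) × (Esp m × ℝ),
          ‖z.1.1‖ < cY → -(2 * ε) < z.1.2 → z.1.2 < τ + 2 * ε →
          pPsiSch A B R V E β τ ρ z = 0 →
          |quadForm (A z.1.1) z.2.1 - (β ^ 2 + E - V z.1)| ≤ C * τ0 ∧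
          |z.2.2| ≤ C * τ0 := by
  set Λ : ℝ := m * A0
  set S : ℝ := 2 * (β ^ 2 + |MV| + Λ) / A1 + 1
  set C₁ : ℝ := (3 * Λ + CR) * S / β * (2 * cρ)
  set C₂ : ℝ := C₁ ^ 2 + Λ * (2 * cρ) + (2 * Λ + CR) * (S + 1) * 2
  have hS : 1 ≤ S := le_add_of_nonneg_left (by positivity)
  have hC₁ : 0 ≤ C₁ := by positivity
  obtain ⟨τ0, hτ0, hτ0_half, hcρτ0, hsmall⟩ :=
    exists_pos_small_enough hA1 hcρ.le (show 0 ≤ 2 * Λ + CR by positivity)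
  refine ⟨τ0, hτ0, C₁ + C₂, by positivity, ?_⟩
  intro A B R V _ _ _ _ hVE _ hell hAB hR _ τ hτ hττ0 ε hε hετ0 ρ _ _ hdρ _ ⟨⟨y', yn⟩, ξ', ξn⟩
    hy' hyn_lo hyn_hi hp
  simp only at hy' hyn_lo hyn_hi ⊢
  obtain ⟨hre, him⟩ := pPsiSch_eq_zero_iff.1 hp
  have hy'2 : ‖y'‖ < 2 * cY := by linarith [norm_nonneg y']
  have hyn : |yn| ≤ 2 * τ0 := abs_le.2 ⟨by linarith, by linarith⟩
  have hη : ‖(2 * τ) • gradient ρ y'‖ ≤ 2 * cρ * τ0 := by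
    rw [norm_smul, norm_gradient, Real.norm_of_nonneg (by positivity)]
    nlinarith [hdρ y', norm_nonneg (fderiv ℝ ρ y')]
  have hA := abs_quadForm_le_of_abs_le fun i j => (hAB y' hy'2 i j).1
  have hB := abs_quadForm_le_of_abs_le fun i j => (hAB y' hy'2 i j).2.1
  have hRy := fun v => (hR (y', yn) (by linarith) v).1
  have hξ := norm_sq_le_of_pPsiSchRe_eq_zero hA hB hRy hre (hell y' hy'2 ξ') hA1 (by positivity)
    hCR.le ((hVE _).trans (le_abs_self MV)) (by linarith)
    ((mul_le_mul_of_nonneg_right hyn (by positivity)).trans hsmall) (hη.trans hcρτ0)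
  have hξ' : ‖ξ'‖ ≤ S := by nlinarith [norm_nonneg ξ']
  have hξn : |ξn| ≤ C₁ * τ0 := (abs_le_of_pPsiSchIm_eq_zero hA hB hRy him hβ (by positivity)
    hCR.le (by linarith) hξ' hη).trans_eq (by ring)
  have hre' := abs_quadForm_sub_le_of_pPsiSchRe_eq_zero hA hB hRy hre (by positivity) hCR.le hyn
    (by linarith) hη hcρτ0 hξ hξn
  rw [show β ^ 2 + E - V (y', yn) = β ^ 2 - (V (y', yn) - E) by ring]
  refine ⟨hre'.trans ?_, hξn.trans ?_⟩
  · nlinarith [mul_le_mul_of_nonneg_left hτ0_half (mul_nonneg (sq_nonneg C₁) hτ0.le)]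
  · nlinarith [mul_nonneg (by positivity : (0:ℝ) ≤ C₂) hτ0.le]

/-- there are `τ₀ > 0` and `C > 0`, depending only on `n = m + 1`, the
constants `c_Y, C_R, c_ρ, A₀, A₁`, the number `β`, and the bounds `MV ≥ sup|V − E|` and
`MdV ≥ sup|∂_y V|`, such that for all data `a, b, R, V` as in the context (with
`β² > MV`, `δ₀ = β² − MV`, and the curvature-type condition
`2b(y',ξ') > MdV` whenever `a(y',ξ') ≥ δ₀/2`), all `0 < τ ≤ τ₀`, `0 < ε ≤ τ₀/10`, all
smooth `ρ ≤ 0` with first and second derivatives bounded by `c_ρ`, and every `(y, ξ)`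
with `y ∈ W(τ, ε)` and `p_ψ(y, ξ) = 0`, one has
`|a(y', ξ') − (β² + E − V(y))| ≤ C τ₀` and `|ξₙ| ≤ C τ₀`. -/
theorem statement4 (m : ℕ) (hm : 1 ≤ m)
    (cY CR cρ A0 A1 : ℝ)
    (hcY : 0 < cY) (hCR : 0 < CR) (hcρ : 0 < cρ) (hA0 : 0 < A0) (hA1 : 0 < A1)
    (E β MV MdV : ℝ) (hβ : 0 < β) (hβ2 : MV < β ^ 2) :
    ∃ τ0 : ℝ, 0 < τ0 ∧ ∃ C : ℝ, 0 < C ∧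
      ∀ (A B : Esp m → Matrix (Fin m) (Fin m) ℝ)
        (R : Esp m × ℝ → Matrix (Fin m) (Fin m) ℝ) (V : Esp m × ℝ → ℝ),
        (∀ i j, ContDiffOn ℝ (⊤ : ℕ∞) (fun y' => A y' i j) {y' : Esp m | ‖y'‖ < 2 * cY}) →
        (∀ i j, ContDiffOn ℝ (⊤ : ℕ∞) (fun y' => B y' i j) {y' : Esp m | ‖y'‖ < 2 * cY}) →
        (∀ i j, ContDiff ℝ (⊤ : ℕ∞) (fun y => R y i j)) →
        ContDiff ℝ (⊤ : ℕ∞) V →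
        (∀ y : Esp m × ℝ, |V y - E| ≤ MV) →
        (∀ y : Esp m × ℝ, ‖fderiv ℝ V y‖ ≤ MdV) →
        (∀ y' : Esp m, ‖y'‖ < 2 * cY → ∀ ξ' : Esp m,
          A1 * ‖ξ'‖ ^ 2 ≤ quadForm (A y') ξ') →
        (∀ y' : Esp m, ‖y'‖ < 2 * cY → ∀ i j,
          |A y' i j| ≤ A0 ∧ |B y' i j| ≤ A0 ∧
          ∀ k, |fderiv ℝ (fun w => A w i j) y' (EuclideanSpace.single k (1 : ℝ))| ≤ A0 ∧
               |fderiv ℝ (fun w => B w i j) y' (EuclideanSpace.single k (1 : ℝ))| ≤ A0) →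
        (∀ y : Esp m × ℝ, |y.2| ≤ 1 → ∀ ξ' : Esp m,
          |quadForm (R y) ξ'| ≤ CR * y.2 ^ 2 * ‖ξ'‖ ^ 2 ∧
          ‖fderiv ℝ (fun w => quadForm (R w) ξ') y‖ ≤ CR * |y.2| * ‖ξ'‖ ^ 2) →
        (∀ y' : Esp m, ‖y'‖ < 2 * cY → ∀ ξ' : Esp m,
          (β ^ 2 - MV) / 2 ≤ quadForm (A y') ξ' → MdV < 2 * quadForm (B y') ξ') →
        ∀ τ : ℝ, 0 < τ → τ ≤ τ0 →
        ∀ ε : ℝ, 0 < ε → ε ≤ τ0 / 10 →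
        ∀ ρ : Esp m → ℝ, ContDiff ℝ (⊤ : ℕ∞) ρ → (∀ y', ρ y' ≤ 0) →
          (∀ y', ‖fderiv ℝ ρ y'‖ ≤ cρ) →
          (∀ y', ‖fderiv ℝ (fderiv ℝ ρ) y'‖ ≤ cρ) →
        ∀ z : (Esp m × ℝ) × (Esp m × ℝ),
          ‖z.1.1‖ < cY → -(2 * ε) < z.1.2 → z.1.2 < τ + 2 * ε →
          pPsiSch A B R V E β τ ρ z = 0 →
          |quadForm (A z.1.1) z.2.1 - (β ^ 2 + E - V z.1)| ≤ C * τ0 ∧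
          |z.2.2| ≤ C * τ0 :=
  statement4_general m cY CR cρ A0 A1 hCR hcρ hA0 hA1 E β MV MdV hβ

end
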